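/- arXiv:2505.04543 — 7 statements merged into one kernel-verified Lean document; each statement's English description precedes it below -/
import Mathlib

section
/- For every graph G of maximum degree Δ and every integer h ≥ 1, there exists a proper (h+1)Δ+1-colouring σ of G such that every vertex v has at least min(h, deg(v)) neighbours whose colour under σ appears exactly once in the neighbourhood of v. -/
/-!
Colour the vertices greedily, one at a time. Every vertex `u` keeps a set `W u` of
`min h (number of coloured neighbours)` coloured neighbours whose colours are unique among its
coloured neighbours. A new vertex `a` avoids the colours of its coloured neighbours and the
colours of `W u` for every neighbour `u`: at most `Δ + hΔ` colours, so one of the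
`(h + 1)Δ + 1` colours is free. Then `a` joins every `W u` that is still short of `h`; such a
`W u` is all of the coloured neighbourhood of `u`, so its colours all differ from that of `a`.
-/

open Finset

/-- Number of witnesses of `v` in colouring `σ`: neighbours `u` of `v` whose colour
appears exactly once in the neighbourhood of `v`. -/
def witnessCount {V : Type*} [Fintype V] (G : SimpleGraph V) [DecidableRel G.Adj]
    {k : ℕ} (σ : V → Fin k) (v : V) : ℕ :=
  ((G.neighborFinset v).filter
    (fun u => ((G.neighborFinset v).filter (fun w => σ w = σ u)).card = 1)).card

namespace SimpleGraph

variable {V α : Type*} (G : SimpleGraph V) [DecidableRel G.Adj]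

theorem card_le_witnessCount [Fintype V] {k : ℕ} (σ : V → Fin k) (v : V) {W : Finset V}
    (hW : W ⊆ G.neighborFinset v)
    (hunique : ∀ w ∈ W, ∀ x ∈ G.neighborFinset v, σ x = σ w → x = w) :
    #W ≤ witnessCount G σ v := by
  refine card_le_card fun w hw => mem_filter.2 ⟨hW hw, card_eq_one.2 ⟨w, ?_⟩⟩
  exact eq_singleton_iff_unique_mem.2
    ⟨mem_filter.2 ⟨hW hw, rfl⟩, fun x hx => (mem_filter.1 hx).elim (hunique w hw x)⟩

variable [DecidableEq V]

def insertWitness (h : ℕ) (W : V → Finset V) (a u : V) : Finset V :=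
  if G.Adj u a ∧ #(W u) < h then insert a (W u) else W u

theorem mem_insertWitness {h : ℕ} {W : V → Finset V} {a u w : V} :
    w ∈ G.insertWitness h W a u ↔ w = a ∧ G.Adj u a ∧ #(W u) < h ∨ w ∈ W u := by
  unfold insertWitness
  split_ifs with hu <;> simp [hu]

variable [Fintype V]

theorem neighborFinset_inter_insert_of_adj {u a : V} (hua : G.Adj u a) (C : Finset V) :
    G.neighborFinset u ∩ insert a C = insert a (G.neighborFinset u ∩ C) :=
  inter_insert_of_mem ((G.mem_neighborFinset u a).2 hua)

theorem neighborFinset_inter_insert_of_not_adj {u a : V} (hua : ¬G.Adj u a) (C : Finset V) :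
    G.neighborFinset u ∩ insert a C = G.neighborFinset u ∩ C :=
  inter_insert_of_notMem (mt (G.mem_neighborFinset u a).1 hua)

theorem proper_update_insert [DecidableEq α] {C : Finset V} {σ : V → α} {a : V} {c : α}
    (hσ : ∀ u ∈ C, ∀ w ∈ C, G.Adj u w → σ u ≠ σ w) (ha : a ∉ C)
    (hc : c ∉ (G.neighborFinset a ∩ C).image σ) :
    ∀ u ∈ insert a C, ∀ w ∈ insert a C, G.Adj u w →
      Function.update σ a c u ≠ Function.update σ a c w := by
  have hσ' : ∀ x ∈ C, Function.update σ a c x = σ x := fun x hx =>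
    Function.update_of_ne (ne_of_mem_of_not_mem hx ha) c σ
  have hnew : ∀ w ∈ C, G.Adj a w → c ≠ σ w := fun w hw haw he =>
    hc (mem_image.2 ⟨w, mem_inter.2 ⟨(G.mem_neighborFinset a w).2 haw, hw⟩, he.symm⟩)
  intro u hu w hw huw
  rcases mem_insert.1 hu with rfl | huC <;> rcases mem_insert.1 hw with rfl | hwC
  · exact absurd huw G.irrefl
  · rw [Function.update_self, hσ' w hwC]; exact hnew w hwC huw
  · rw [Function.update_self, hσ' u huC]; exact (hnew u huC huw.symm).symm
  · rw [hσ' u huC, hσ' w hwC]; exact hσ u huC w hwC huw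

theorem insertWitness_subset {h : ℕ} {C : Finset V} {W : V → Finset V} {a : V}
    (hW : ∀ u, W u ⊆ G.neighborFinset u ∩ C) (u : V) :
    G.insertWitness h W a u ⊆ G.neighborFinset u ∩ insert a C := by
  intro w hw
  rcases G.mem_insertWitness.1 hw with ⟨rfl, hua, -⟩ | hw
  · exact mem_inter.2 ⟨(G.mem_neighborFinset u w).2 hua, mem_insert_self w C⟩
  · exact inter_subset_inter_left (subset_insert a C) (hW u hw)

theorem card_insertWitness {h : ℕ} {C : Finset V} {W : V → Finset V} {a : V} (ha : a ∉ C)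
    (hW : ∀ u, W u ⊆ G.neighborFinset u ∩ C)
    (hcard : ∀ u, #(W u) = min h #(G.neighborFinset u ∩ C)) (u : V) :
    #(G.insertWitness h W a u) = min h #(G.neighborFinset u ∩ insert a C) := by
  have := hcard u
  have haN : a ∉ G.neighborFinset u ∩ C := fun haN => ha (mem_inter.1 haN).2
  unfold insertWitness
  by_cases hua : G.Adj u a
  · rw [G.neighborFinset_inter_insert_of_adj hua, card_insert_of_notMem haN]
    split_ifs with hu
    · rw [card_insert_of_notMem fun haW => haN (hW u haW)]; omega
    · have := not_lt.1 fun hlt => hu ⟨hua, hlt⟩; omega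
  · rw [if_neg fun hu => hua hu.1, G.neighborFinset_inter_insert_of_not_adj hua, this]

structure IsPartialPcf (h : ℕ) (C : Finset V) (σ : V → α) (W : V → Finset V) : Prop where
  proper : ∀ u ∈ C, ∀ w ∈ C, G.Adj u w → σ u ≠ σ w
  subset : ∀ u, W u ⊆ G.neighborFinset u ∩ C
  card_eq : ∀ u, #(W u) = min h #(G.neighborFinset u ∩ C)
  unique : ∀ u, ∀ w ∈ W u, ∀ x ∈ G.neighborFinset u ∩ C, σ x = σ w → x = w

theorem isPartialPcf_empty (h : ℕ) (σ : V → α) : G.IsPartialPcf h ∅ σ fun _ => ∅ :=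
  ⟨by simp, by simp, by simp, by simp⟩

def forbiddenColours [DecidableEq α] (C : Finset V) (σ : V → α) (W : V → Finset V) (a : V) :
    Finset α :=
  (G.neighborFinset a ∩ C).image σ ∪ (G.neighborFinset a).biUnion fun u => (W u).image σ

theorem card_forbiddenColours_le [DecidableEq α] {Δ h : ℕ} (hΔ : ∀ v, G.degree v ≤ Δ)
    (C : Finset V) (σ : V → α) {W : V → Finset V} (hW : ∀ u, #(W u) ≤ h) (a : V) :
    #(G.forbiddenColours C σ W a) ≤ (h + 1) * Δ := by
  have hdeg : #(G.neighborFinset a) ≤ Δ := (G.card_neighborFinset_eq_degree a).trans_le (hΔ a)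
  have hnbrs : #((G.neighborFinset a ∩ C).image σ) ≤ Δ :=
    card_image_le.trans ((card_le_card inter_subset_left).trans hdeg)
  have hwitnesses : #((G.neighborFinset a).biUnion fun u => (W u).image σ) ≤ Δ * h :=
    (card_biUnion_le_card_mul _ _ h fun u _ => card_image_le.trans (hW u)).trans
      (Nat.mul_le_mul_right h hdeg)
  calc #(G.forbiddenColours C σ W a) ≤ Δ + Δ * h := (card_union_le _ _).trans (by omega)
    _ = (h + 1) * Δ := by ring

theorem IsPartialPcf.unique_extend [DecidableEq α] {h : ℕ} {C : Finset V} {σ : V → α}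
    {W : V → Finset V} {a : V} {c : α} (hP : G.IsPartialPcf h C σ W) (ha : a ∉ C)
    (hc : c ∉ G.forbiddenColours C σ W a) (u : V) :
    ∀ w ∈ G.insertWitness h W a u, ∀ x ∈ G.neighborFinset u ∩ insert a C,
      Function.update σ a c x = Function.update σ a c w → x = w := by
  intro w hw x hx hxw
  have hσ : ∀ y ∈ G.neighborFinset u ∩ C, Function.update σ a c y = σ y := fun y hy =>
    Function.update_of_ne (ne_of_mem_of_not_mem (mem_inter.1 hy).2 ha) c σ
  by_cases hua : G.Adj u a
  swap
  · rw [insertWitness, if_neg fun hu => hua hu.1] at hw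
    rw [G.neighborFinset_inter_insert_of_not_adj hua] at hx
    rw [hσ x hx, hσ w (hP.subset u hw)] at hxw
    exact hP.unique u w hw x hx hxw
  have hwitness_ne : ∀ y ∈ W u, Function.update σ a c y ≠ Function.update σ a c a := by
    intro y hy
    rw [hσ y (hP.subset u hy), Function.update_self]
    exact fun he => hc (mem_union_right _ (mem_biUnion.2
      ⟨u, (G.mem_neighborFinset a u).2 hua.symm, mem_image.2 ⟨y, hy, he⟩⟩))
  rw [G.neighborFinset_inter_insert_of_adj hua] at hx
  rcases mem_insert.1 hx with rfl | hxC <;>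
    rcases G.mem_insertWitness.1 hw with ⟨rfl, -, hshort⟩ | hwW
  · rfl
  · exact absurd hxw.symm (hwitness_ne w hwW)
  · -- `W u` is short only when it is all of the coloured neighbourhood of `u`
    have hfull : W u = G.neighborFinset u ∩ C :=
      eq_of_subset_of_card_le (hP.subset u) (by have := hP.card_eq u; omega)
    exact absurd hxw (hwitness_ne x (hfull ▸ hxC))
  · rw [hσ x hxC, hσ w (hP.subset u hwW)] at hxw
    exact hP.unique u w hwW x hxC hxw

theorem IsPartialPcf.extend [DecidableEq α] {h : ℕ} {C : Finset V} {σ : V → α}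
    {W : V → Finset V} {a : V} {c : α} (hP : G.IsPartialPcf h C σ W) (ha : a ∉ C)
    (hc : c ∉ G.forbiddenColours C σ W a) :
    G.IsPartialPcf h (insert a C) (Function.update σ a c) (G.insertWitness h W a) :=
  ⟨G.proper_update_insert hP.proper ha fun hc' => hc (mem_union_left _ hc'),
    G.insertWitness_subset hP.subset, G.card_insertWitness ha hP.subset hP.card_eq,
    hP.unique_extend G ha hc⟩

theorem exists_isPartialPcf [Fintype α] [DecidableEq α] {Δ h : ℕ}
    (hΔ : ∀ v, G.degree v ≤ Δ) (hα : (h + 1) * Δ < Fintype.card α) (C : Finset V) :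
    ∃ (σ : V → α) (W : V → Finset V), G.IsPartialPcf h C σ W := by
  induction C using Finset.induction_on with
  | empty =>
    obtain ⟨c⟩ : Nonempty α := Fintype.card_pos_iff.1 (by omega)
    exact ⟨fun _ => c, _, G.isPartialPcf_empty h _⟩
  | @insert a C ha ih =>
    obtain ⟨σ, W, hP⟩ := ih
    have hW : ∀ u, #(W u) ≤ h := fun u => (hP.card_eq u).trans_le (min_le_left _ _)
    obtain ⟨c, -, hc⟩ := exists_mem_notMem_of_card_lt_card
      ((G.card_forbiddenColours_le hΔ C σ hW a).trans_lt (hα.trans_eq card_univ.symm))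
    exact ⟨_, _, hP.extend G ha hc⟩

end SimpleGraph

theorem pcf_greedy_general {V : Type*} [Fintype V] (G : SimpleGraph V) [DecidableRel G.Adj]
    (Δ h : ℕ) (hΔ : ∀ v, G.degree v ≤ Δ) :
    ∃ σ : V → Fin ((h + 1) * Δ + 1),
      (∀ u v, G.Adj u v → σ u ≠ σ v) ∧
      ∀ v, min h (G.degree v) ≤ witnessCount G σ v := by
  classical
  obtain ⟨σ, W, hP⟩ :=
    G.exists_isPartialPcf (h := h) (α := Fin ((h + 1) * Δ + 1)) hΔ (by simp) univ
  refine ⟨σ, fun u v huv => hP.proper u (mem_univ u) v (mem_univ v) huv, fun v => ?_⟩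
  calc min h (G.degree v) = #(W v) := by simpa using (hP.card_eq v).symm
    _ ≤ witnessCount G σ v :=
      G.card_le_witnessCount σ v (by simpa using hP.subset v) (by simpa using hP.unique v)

theorem pcf_greedy {V : Type*} [Fintype V] (G : SimpleGraph V) [DecidableRel G.Adj]
    (Δ h : ℕ) (hh : 1 ≤ h) (hΔ : ∀ v, G.degree v ≤ Δ) :
    ∃ σ : V → Fin ((h + 1) * Δ + 1),
      (∀ u v, G.Adj u v → σ u ≠ σ v) ∧
      ∀ v, min h (G.degree v) ≤ witnessCount G σ v :=
  pcf_greedy_general G Δ h hΔ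
end

section
/- For every d-degenerate graph G of maximum degree Δ and every integer h ≥ 1, G admits a proper h-conflict-free colouring using at most hΔ + d + 1 colours, i.e. χ_pcf^h(G) ≤ hΔ + d + 1. -/
open Finset

/-- `G` is `d`-degenerate: every nonempty set of vertices contains a vertex with at
most `d` neighbours inside the set. -/
def Degenerate {V : Type*} [Fintype V] [DecidableEq V] (G : SimpleGraph V)
    [DecidableRel G.Adj] (d : ℕ) : Prop :=
  ∀ s : Finset V, s.Nonempty → ∃ v ∈ s, ((G.neighborFinset v) ∩ s).card ≤ d

/-!
Colour the vertices one at a time, in the reverse of a degeneracy order, maintaining that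
every vertex `x` already has `min h k` witnesses among its `k` coloured neighbours. When `v`
is coloured, each neighbour `x` of `v` designates at most `h` of its current witnesses, and
`v` avoids their colours as well as the colours of its at most `d` coloured neighbours: at
most `hΔ + d` colours are excluded. The designated witnesses of `x` stay witnesses, and if `x`
had fewer than `h` witnesses then all its coloured neighbours were designated, so `v` becomes
a witness of `x` too.
-/

section UniquelyColored

variable {V α : Type*} [DecidableEq α] {σ τ : V → α} {A W : Finset V} {u v : V}

def uniquelyColored (σ : V → α) (A : Finset V) : Finset V :=
  A.filter fun u => (A.filter fun w => σ w = σ u).card = 1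

theorem uniquelyColored_subset : uniquelyColored σ A ⊆ A :=
  filter_subset _ _

theorem uniquelyColored_congr (hστ : ∀ u ∈ A, σ u = τ u) :
    uniquelyColored σ A = uniquelyColored τ A :=
  filter_congr fun u hu => by rw [filter_congr fun w hw => by rw [hστ w hw, hστ u hu]]

theorem mem_uniquelyColored_insert [DecidableEq V] (hu : u ∈ uniquelyColored σ A)
    (hne : σ v ≠ σ u) :
    u ∈ uniquelyColored σ (insert v A) := by
  rw [uniquelyColored, mem_filter] at hu ⊢
  rw [filter_insert, if_neg hne]
  exact ⟨mem_insert_of_mem hu.1, hu.2⟩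

theorem self_mem_uniquelyColored_insert [DecidableEq V] (hv : ∀ w ∈ A, σ w ≠ σ v) :
    v ∈ uniquelyColored σ (insert v A) := by
  rw [uniquelyColored, mem_filter, filter_insert, if_pos rfl, filter_false_of_mem hv]
  exact ⟨mem_insert_self v A, card_singleton v⟩

theorem min_le_card_uniquelyColored_insert [DecidableEq V] {h : ℕ}
    (hA : min h #A ≤ #(uniquelyColored σ A)) (hW : W ⊆ uniquelyColored σ A)
    (hWcard : min h #(uniquelyColored σ A) ≤ #W) (hv : ∀ u ∈ W, σ u ≠ σ v) :
    min h #(insert v A) ≤ #(uniquelyColored σ (insert v A)) := by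
  have hW' : W ⊆ uniquelyColored σ (insert v A) := fun u hu =>
    mem_uniquelyColored_insert (hW hu) (hv u hu).symm
  rcases le_or_gt h #(uniquelyColored σ A) with hbig | hsmall
  · calc min h #(insert v A) ≤ h := min_le_left _ _
      _ ≤ #W := by rwa [min_eq_left hbig] at hWcard
      _ ≤ _ := card_le_card hW'
  · have hUA := card_le_card (uniquelyColored_subset (σ := σ) (A := A))
    have hWA : W = A :=
      eq_of_subset_of_card_le (hW.trans uniquelyColored_subset) (by omega)
    subst hWA
    exact (min_le_right _ _).trans
      (card_le_card (insert_subset (self_mem_uniquelyColored_insert hv) hW'))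

theorem exists_forall_ne_of_card_lt [Fintype α] (σ : V → α) {S : Finset V}
    (hS : #S < Fintype.card α) : ∃ c, ∀ u ∈ S, σ u ≠ c := by
  obtain ⟨c, -, hc⟩ := exists_mem_notMem_of_card_lt_card
    (card_image_le.trans_lt (hS.trans_eq (card_univ (α := α)).symm) : #(S.image σ) < #univ)
  exact ⟨c, fun u hu hcu => hc (mem_image.2 ⟨u, hu, hcu⟩)⟩

end UniquelyColored

namespace SimpleGraph

variable {V α : Type*} [DecidableEq α]

theorem witnessCount_eq_card_uniquelyColored [Fintype V] (G : SimpleGraph V)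
    [DecidableRel G.Adj] {k : ℕ} (σ : V → Fin k) (v : V) :
    witnessCount G σ v = #(uniquelyColored σ (G.neighborFinset v)) :=
  rfl

variable [Fintype V] [DecidableEq V] (G : SimpleGraph V) [DecidableRel G.Adj]

structure IsConflictFreeOn (h : ℕ) (σ : V → α) (s : Finset V) : Prop where
  proper : ∀ u ∈ s, ∀ w ∈ s, G.Adj u w → σ u ≠ σ w
  witnesses : ∀ x, min h #(G.neighborFinset x ∩ s) ≤
    #(uniquelyColored σ (G.neighborFinset x ∩ s))

variable {G}

theorem IsConflictFreeOn.update_insert {h : ℕ} {σ : V → α} {s : Finset V} {v : V} {c : α}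
    {W : V → Finset V} (hσ : G.IsConflictFreeOn h σ s) (hv : v ∉ s)
    (hWsub : ∀ x, W x ⊆ uniquelyColored σ (G.neighborFinset x ∩ s))
    (hWcard : ∀ x, min h #(uniquelyColored σ (G.neighborFinset x ∩ s)) ≤ #(W x))
    (hback : ∀ u ∈ G.neighborFinset v ∩ s, σ u ≠ c)
    (hprotected : ∀ x ∈ G.neighborFinset v, ∀ u ∈ W x, σ u ≠ c) :
    G.IsConflictFreeOn h (Function.update σ v c) (insert v s) := by
  have hτs : ∀ u ∈ s, Function.update σ v c u = σ u := fun u hu =>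
    Function.update_of_ne (ne_of_mem_of_not_mem hu hv) _ _
  have hτv : Function.update σ v c v = c := Function.update_self v c σ
  refine ⟨?_, fun x => ?_⟩
  · have hvw : ∀ w ∈ s, G.Adj v w → Function.update σ v c v ≠ Function.update σ v c w :=
      fun w hw hadj => by
        rw [hτv, hτs w hw]
        exact (hback w (mem_inter.2 ⟨(mem_neighborFinset G v w).2 hadj, hw⟩)).symm
    intro u hu w hw hadj
    rcases mem_insert.1 hu with rfl | hus
    · rcases mem_insert.1 hw with rfl | hws
      · exact (G.irrefl hadj).elim
      · exact hvw w hws hadj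
    rcases mem_insert.1 hw with rfl | hws
    · exact (hvw u hus hadj.symm).symm
    · rw [hτs u hus, hτs w hws]
      exact hσ.proper u hus w hws hadj
  have hU : uniquelyColored σ (G.neighborFinset x ∩ s) =
      uniquelyColored (Function.update σ v c) (G.neighborFinset x ∩ s) :=
    uniquelyColored_congr fun u hu => (hτs u (mem_inter.1 hu).2).symm
  by_cases hxv : G.Adj x v
  · rw [inter_insert_of_mem ((mem_neighborFinset G x v).2 hxv)]
    refine min_le_card_uniquelyColored_insert (W := W x) ?_ ?_ ?_ fun u hu => ?_
    · rw [← hU]; exact hσ.witnesses x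
    · rw [← hU]; exact hWsub x
    · rw [← hU]; exact hWcard x
    · have hus := (mem_inter.1 (uniquelyColored_subset (hWsub x hu))).2
      rw [hτv, hτs u hus]
      exact hprotected x ((mem_neighborFinset G v x).2 hxv.symm) u hu
  · rw [inter_insert_of_notMem (mt (mem_neighborFinset G x v).1 hxv), ← hU]
    exact hσ.witnesses x

theorem IsConflictFreeOn.exists_update [Fintype α] {h Δ d : ℕ} {σ : V → α} {s : Finset V}
    {v : V} (hσ : G.IsConflictFreeOn h σ s) (hv : v ∉ s)
    (hback : #(G.neighborFinset v ∩ s) ≤ d) (hΔ : G.degree v ≤ Δ)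
    (hα : h * Δ + d < Fintype.card α) :
    ∃ c, G.IsConflictFreeOn h (Function.update σ v c) (insert v s) := by
  choose W hWsub hWcard using fun x =>
    exists_subset_card_eq (min_le_right h #(uniquelyColored σ (G.neighborFinset x ∩ s)))
  obtain ⟨c, hc⟩ : ∃ c, ∀ u ∈ (G.neighborFinset v ∩ s) ∪ (G.neighborFinset v).biUnion W,
      σ u ≠ c := by
    refine exists_forall_ne_of_card_lt σ ?_
    calc _ ≤ #(G.neighborFinset v ∩ s) + #((G.neighborFinset v).biUnion W) :=
          card_union_le _ _
      _ ≤ d + G.degree v * h := by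
          rw [← card_neighborFinset_eq_degree]
          exact add_le_add hback (card_biUnion_le_card_mul _ _ _ fun x _ =>
            (hWcard x).trans_le (min_le_left _ _))
      _ < _ := by nlinarith
  exact ⟨c, hσ.update_insert hv hWsub (fun x => (hWcard x).ge)
    (fun u hu => hc u (mem_union_left _ hu))
    (fun x hx u hu => hc u (mem_union_right _ (mem_biUnion.2 ⟨x, hx, hu⟩)))⟩

theorem exists_isConflictFreeOn [Fintype α] {h Δ d : ℕ} (hΔ : ∀ v, G.degree v ≤ Δ)
    (hdeg : Degenerate G d) (hα : h * Δ + d < Fintype.card α) (s : Finset V) :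
    ∃ σ : V → α, G.IsConflictFreeOn h σ s := by
  induction s using Finset.strongInduction with
  | H s ih =>
  rcases s.eq_empty_or_nonempty with rfl | hs
  · have : Nonempty α := Fintype.card_pos_iff.1 (by omega)
    exact ⟨fun _ => Classical.arbitrary α, ⟨by simp, by simp⟩⟩
  · obtain ⟨v, hv, hback⟩ := hdeg s hs
    obtain ⟨σ, hσ⟩ := ih (s.erase v) (erase_ssubset hv)
    obtain ⟨c, hc⟩ := hσ.exists_update (notMem_erase v s)
      ((card_le_card (inter_subset_inter_left (erase_subset v s))).trans hback) (hΔ v) hα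
    exact ⟨_, insert_erase hv ▸ hc⟩

end SimpleGraph

open SimpleGraph in
theorem pcf_degenerate_general {V : Type*} [Fintype V] [DecidableEq V] (G : SimpleGraph V)
    [DecidableRel G.Adj] (Δ h d : ℕ) (hΔ : ∀ v, G.degree v ≤ Δ)
    (hdeg : Degenerate G d) :
    ∃ σ : V → Fin (h * Δ + d + 1),
      (∀ u v, G.Adj u v → σ u ≠ σ v) ∧
      ∀ v, min h (G.degree v) ≤ witnessCount G σ v := by
  obtain ⟨σ, hσ⟩ :=
    exists_isConflictFreeOn (α := Fin (h * Δ + d + 1)) (h := h) hΔ hdeg (by simp) univ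
  refine ⟨σ, fun u v huv => hσ.proper u (mem_univ u) v (mem_univ v) huv, fun v => ?_⟩
  simpa only [inter_univ, card_neighborFinset_eq_degree,
    witnessCount_eq_card_uniquelyColored] using hσ.witnesses v

theorem pcf_degenerate {V : Type*} [Fintype V] [DecidableEq V] (G : SimpleGraph V)
    [DecidableRel G.Adj] (Δ h d : ℕ) (hh : 1 ≤ h) (hΔ : ∀ v, G.degree v ≤ Δ)
    (hdeg : Degenerate G d) :
    ∃ σ : V → Fin (h * Δ + d + 1),
      (∀ u v, G.Adj u v → σ u ≠ σ v) ∧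
      ∀ v, min h (G.degree v) ≤ witnessCount G σ v :=
  pcf_degenerate_general G Δ h d hΔ hdeg
end

section
/- For every graph G of maximum degree Δ and every integer t with 0 ≤ t < 2Δ/3, every proper colouring of G in which each vertex v sees at least min(Δ−t, deg(v)) colours appearing an odd number of times in its neighbourhood is also a proper colouring in which each vertex v sees at least min(Δ − 3t/2, deg(v)) colours appearing exactly once in its neighbourhood. Consequently, χ_pcf^{Δ−3t/2}(G) ≤ χ_o^{Δ−t}(G). -/
open Finset

variable {V : Type*} [Fintype V] [DecidableEq V]

/-- Number of colours appearing an odd number of times in the neighbourhood of `v`. -/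
def oddColourCount {α : Type*} [DecidableEq α] (G : SimpleGraph V) [DecidableRel G.Adj]
    (σ : V → α) (v : V) : ℕ :=
  (((G.neighborFinset v).image σ).filter
    (fun c => Odd ((G.neighborFinset v).filter (fun w => σ w = c)).card)).card

/-- Number of colours appearing exactly once in the neighbourhood of `v`. -/
def solitaryColourCount {α : Type*} [DecidableEq α] (G : SimpleGraph V)
    [DecidableRel G.Adj] (σ : V → α) (v : V) : ℕ :=
  (((G.neighborFinset v).image σ).filter
    (fun c => ((G.neighborFinset v).filter (fun w => σ w = c)).card = 1)).card

/-! A colour of odd multiplicity either occurs once or at least three times, so each vertex `v`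
satisfies `3 · odd(v) ≤ deg v + 2 · solitary(v)`. If `deg v ≤ Δ - t`, the hypothesis forces every
colour of `N(v)` to occur an odd number of times and hence `odd(v) = deg v = solitary(v)`;
otherwise `2 · solitary(v) ≥ 3 (Δ - t) - Δ = 2Δ - 3t`. -/

theorem Finset.three_mul_card_odd_fibres_le {ι α : Type*} [DecidableEq α] (s : Finset ι)
    (f : ι → α) :
    3 * #{c ∈ s.image f | Odd #{i ∈ s | f i = c}} ≤
      #s + 2 * #{c ∈ s.image f | #{i ∈ s | f i = c} = 1} := by
  rw [card_filter, card_filter, card_eq_sum_card_image f s, mul_sum, mul_sum, ← sum_add_distrib]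
  refine sum_le_sum fun c _ => ?_
  set m := #{i ∈ s | f i = c}
  by_cases hodd : Odd m
  · obtain ⟨k, hk⟩ := hodd
    split_ifs <;> omega
  · simp [hodd]

section

omit [DecidableEq V]

variable {α : Type*} [DecidableEq α] (G : SimpleGraph V) [DecidableRel G.Adj] (σ : V → α)
  (v : V)

theorem three_mul_oddColourCount_le :
    3 * oddColourCount G σ v ≤ G.degree v + 2 * solitaryColourCount G σ v := by
  rw [← G.card_neighborFinset_eq_degree]
  exact (G.neighborFinset v).three_mul_card_odd_fibres_le σ

theorem oddColourCount_le_degree : oddColourCount G σ v ≤ G.degree v := by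
  rw [← G.card_neighborFinset_eq_degree]
  exact (card_filter_le _ _).trans card_image_le

theorem min_le_solitaryColourCount_of_min_le_oddColourCount {Δ t : ℕ} (hv : G.degree v ≤ Δ)
    (ho : min (Δ - t) (G.degree v) ≤ oddColourCount G σ v) :
    min (Δ - 3 * t / 2) (G.degree v) ≤ solitaryColourCount G σ v := by
  have hcount := three_mul_oddColourCount_le G σ v
  have hodd := oddColourCount_le_degree G σ v
  omega

end

theorem odd_implies_pcf_general (G : SimpleGraph V) [DecidableRel G.Adj] (Δ t : ℕ)
    (hΔ : ∀ v, G.degree v ≤ Δ) :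
    (∀ σ : V → ℕ, (∀ u v, G.Adj u v → σ u ≠ σ v) →
      (∀ v, min (Δ - t) (G.degree v) ≤ oddColourCount G σ v) →
      (∀ v, min (Δ - 3 * t / 2) (G.degree v) ≤ solitaryColourCount G σ v)) ∧
    (∀ k : ℕ, (∃ σ : V → Fin k, (∀ u v, G.Adj u v → σ u ≠ σ v) ∧
        ∀ v, min (Δ - t) (G.degree v) ≤ oddColourCount G σ v) →
      (∃ σ : V → Fin k, (∀ u v, G.Adj u v → σ u ≠ σ v) ∧
        ∀ v, min (Δ - 3 * t / 2) (G.degree v) ≤ solitaryColourCount G σ v)) := by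
  refine ⟨fun σ _ ho v => min_le_solitaryColourCount_of_min_le_oddColourCount G σ v (hΔ v) (ho v),
    ?_⟩
  rintro k ⟨σ, hproper, ho⟩
  exact ⟨σ, hproper, fun v =>
    min_le_solitaryColourCount_of_min_le_oddColourCount G σ v (hΔ v) (ho v)⟩

theorem odd_implies_pcf (G : SimpleGraph V) [DecidableRel G.Adj] (Δ t : ℕ)
    (hΔ : ∀ v, G.degree v ≤ Δ) (ht : 3 * t < 2 * Δ) :
    (∀ σ : V → ℕ, (∀ u v, G.Adj u v → σ u ≠ σ v) →
      (∀ v, min (Δ - t) (G.degree v) ≤ oddColourCount G σ v) →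
      (∀ v, min (Δ - 3 * t / 2) (G.degree v) ≤ solitaryColourCount G σ v)) ∧
    (∀ k : ℕ, (∃ σ : V → Fin k, (∀ u v, G.Adj u v → σ u ≠ σ v) ∧
        ∀ v, min (Δ - t) (G.degree v) ≤ oddColourCount G σ v) →
      (∃ σ : V → Fin k, (∀ u v, G.Adj u v → σ u ≠ σ v) ∧
        ∀ v, min (Δ - 3 * t / 2) (G.degree v) ≤ solitaryColourCount G σ v)) :=
  odd_implies_pcf_general G Δ t hΔ
end

section
/- The 5-cycle C₅ satisfies χ_pcf(C₅) = 5; that is, C₅ admits a proper conflict-free 5-colouring but no proper conflict-free 4-colouring. -/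
/-!
In a proper conflict-free colouring, a vertex of degree two must see two different colours on its
neighbours, so vertices at distance one or two get different colours. Any two distinct vertices of
`C₅` are at distance at most two, hence every such colouring of `C₅` is injective and needs five
colours; conversely an injective colouring is always proper conflict-free.
-/

open Finset

/-- `σ` is a proper conflict-free colouring of `G`: it is proper and every non-isolated
vertex has a neighbour whose colour appears exactly once in its neighbourhood. -/
def IsPCF {V : Type*} [Fintype V] [DecidableEq V] (G : SimpleGraph V)
    [DecidableRel G.Adj] {k : ℕ} (σ : V → Fin k) : Prop :=
  (∀ u v, G.Adj u v → σ u ≠ σ v) ∧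
  ∀ v, 0 < G.degree v → ∃ u ∈ G.neighborFinset v,
    ((G.neighborFinset v).filter (fun w => σ w = σ u)).card = 1

namespace IsPCF

variable {V : Type*} [Fintype V] [DecidableEq V] {G : SimpleGraph V} [DecidableRel G.Adj]
  {k : ℕ} {σ : V → Fin k}

theorem of_injective (hσ : Function.Injective σ) : IsPCF G σ := by
  refine ⟨fun u v huv => hσ.ne huv.ne, fun v hv => ?_⟩
  obtain ⟨u, hu⟩ := card_pos.mp hv
  refine ⟨u, hu, card_eq_one.mpr ⟨u, ?_⟩⟩
  ext w
  simp only [mem_filter, mem_singleton]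
  exact ⟨fun h => hσ h.2, by rintro rfl; exact ⟨hu, rfl⟩⟩

theorem apply_ne_of_adj_of_adj (hσ : IsPCF G σ) {v a b : V} (hv : G.degree v = 2)
    (ha : G.Adj v a) (hb : G.Adj v b) (hab : a ≠ b) : σ a ≠ σ b := by
  intro heq
  have hN : G.neighborFinset v = {a, b} :=
    (eq_of_subset_of_card_le
      (by simp [insert_subset_iff, ha, hb])
      (by rw [card_pair hab, G.card_neighborFinset_eq_degree, hv])).symm
  obtain ⟨u, hu, hcard⟩ := hσ.2 v (by omega)
  rw [hN] at hu hcard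
  have hσu : σ u = σ a := by
    rcases mem_insert.mp hu with rfl | hu
    · rfl
    · rw [mem_singleton.mp hu, heq]
  rw [filter_true_of_mem (by simp [hσu, heq]), card_pair hab] at hcard
  omega

theorem injective_of_regular_two_of_dist_le_two (hσ : IsPCF G σ)
    (hG : G.IsRegularOfDegree 2)
    (hdist : ∀ u v, u ≠ v → G.Adj u v ∨ ∃ w, G.Adj w u ∧ G.Adj w v) :
    Function.Injective σ := by
  intro u v huv
  by_contra hne
  rcases hdist u v hne with hadj | ⟨w, hwu, hwv⟩
  · exact hσ.1 u v hadj huv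
  · exact hσ.apply_ne_of_adj_of_adj (hG w) hwu hwv hne huv

end IsPCF

theorem cycleGraph_five_dist_le_two (u v : Fin 5) (huv : u ≠ v) :
    (SimpleGraph.cycleGraph 5).Adj u v ∨ ∃ w, (SimpleGraph.cycleGraph 5).Adj w u ∧
      (SimpleGraph.cycleGraph 5).Adj w v := by
  revert u v; decide

theorem pcf_C5 :
    (∃ σ : Fin 5 → Fin 5, IsPCF (SimpleGraph.cycleGraph 5) σ) ∧
    ¬ (∃ σ : Fin 5 → Fin 4, IsPCF (SimpleGraph.cycleGraph 5) σ) := by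
  refine ⟨⟨id, IsPCF.of_injective Function.injective_id⟩, ?_⟩
  rintro ⟨σ, hσ⟩
  have hinj := hσ.injective_of_regular_two_of_dist_le_two
    (fun _ => SimpleGraph.cycleGraph_degree_three_le) cycleGraph_five_dist_le_two
  simpa using Fintype.card_le_of_injective σ hinj
end

section
/- For every cycle Cₙ with n ≥ 3 whose length n is not a multiple of 3 and n ≠ 5, χ_pcf(Cₙ) = 4; for n a multiple of 3, χ_pcf(Cₙ) = 3. -/
open Finset

/-! Every vertex of a cycle has exactly two neighbours, so a colouring is proper conflict-free
exactly when any three consecutive vertices receive distinct colours. Two colours therefore never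
suffice, and three colours force `σ (v + 3) = σ v`; as `3` generates `ℤ/nℤ` when `3 ∤ n`, this
makes `σ` constant, which is absurd. Conversely, the cyclic word `(012)^a (0123)^b` is such a
colouring of `Cₙ` whenever `n = 3a + 4b`, which is possible for every `n ≥ 3` except `5`; for
`3 ∣ n` the word `(012)^(n/3)` uses only three colours. -/

open SimpleGraph
open scoped Fin.CommRing

section MaxDegreeTwo

variable {V : Type*} [Fintype V] [DecidableEq V] {G : SimpleGraph V} [DecidableRel G.Adj] {k : ℕ}

theorem isPCF_iff_of_degree_le_two (hG : ∀ v, G.degree v ≤ 2) (σ : V → Fin k) :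
    IsPCF G σ ↔ (∀ u v, G.Adj u v → σ u ≠ σ v) ∧
      ∀ v u w, G.Adj v u → G.Adj v w → u ≠ w → σ u ≠ σ w := by
  refine and_congr_right fun _ => ⟨fun hcf v u w hu hw huw hσ => ?_, fun hsq v hv => ?_⟩
  · obtain ⟨x, hx, hcard⟩ := hcf v (G.degree_pos_iff_exists_adj v |>.mpr ⟨u, hu⟩)
    have hpair : G.neighborFinset v = {u, w} := by
      refine (eq_of_subset_of_card_le ?_ ?_).symm
      · simp [insert_subset_iff, hu, hw]
      · rw [card_pair huw, card_neighborFinset_eq_degree]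
        exact hG v
    have hσx : σ x = σ u := by
      rw [hpair, mem_insert, mem_singleton] at hx
      rcases hx with rfl | rfl
      exacts [rfl, hσ.symm]
    have hsub : ({u, w} : Finset V) ⊆ (G.neighborFinset v).filter (fun y => σ y = σ x) := by
      simp [insert_subset_iff, hu, hw, hσx, hσ]
    have hle := card_le_card hsub
    rw [card_pair huw, hcard] at hle
    omega
  · obtain ⟨u, hu⟩ := card_pos.mp (G.card_neighborFinset_eq_degree v ▸ hv)
    refine ⟨u, hu, card_eq_one.mpr ⟨u, eq_singleton_iff_unique_mem.mpr ⟨?_, ?_⟩⟩⟩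
    · exact mem_filter.mpr ⟨hu, rfl⟩
    · intro w hw
      rw [mem_filter, mem_neighborFinset] at hw
      by_contra hwu
      exact hsq v w u hw.1 ((mem_neighborFinset _ _ _).mp hu) hwu hw.2

end MaxDegreeTwo

theorem cycleGraph_adj_iff_eq_add_one {n : ℕ} {u v : Fin (n + 2)} :
    (cycleGraph (n + 2)).Adj u v ↔ u = v + 1 ∨ v = u + 1 := by
  rw [cycleGraph_adj, sub_eq_iff_eq_add, sub_eq_iff_eq_add, add_comm 1 v, add_comm 1 u]

theorem Fin.add_two_ne_self {n : ℕ} (v : Fin (n + 3)) : v + 2 ≠ v := fun h =>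
  two_ne_zero (congrArg Fin.val (add_eq_left.mp h))

theorem isPCF_cycleGraph_iff {n k : ℕ} (σ : Fin (n + 3) → Fin k) :
    IsPCF (cycleGraph (n + 3)) σ ↔ ∀ v, σ v ≠ σ (v + 1) ∧ σ v ≠ σ (v + 2) := by
  have h12 (v : Fin (n + 3)) : v + 1 + 1 = v + 2 := by ring
  rw [isPCF_iff_of_degree_le_two (fun _ => cycleGraph_degree_three_le.le)]
  simp only [cycleGraph_adj_iff_eq_add_one]
  constructor
  · rintro ⟨hprop, hsq⟩ v
    refine ⟨hprop v (v + 1) (.inr rfl), hsq (v + 1) v (v + 2) (.inl rfl) (.inr (h12 v).symm) ?_⟩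
    exact (Fin.add_two_ne_self v).symm
  · intro h
    refine ⟨?_, ?_⟩
    · rintro u v (rfl | rfl)
      exacts [(h v).1.symm, (h u).1]
    · rintro v u w (rfl | rfl) hw huw
      · rcases hw with hw | rfl
        · exact absurd (add_right_cancel hw) huw
        · rw [h12]
          exact (h u).2
      · rcases hw with rfl | rfl
        · rw [h12]
          exact (h w).2.symm
        · exact absurd rfl huw

theorem not_isPCF_cycleGraph_fin_two {n : ℕ} (σ : Fin (n + 3) → Fin 2) :
    ¬ IsPCF (cycleGraph (n + 3)) σ := by
  rw [isPCF_cycleGraph_iff]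
  intro h
  have h12 := (h 1).1
  rw [one_add_one_eq_two] at h12
  have pigeonhole : ∀ a b c : Fin 2, a ≠ b → a ≠ c → b ≠ c → False := by omega
  exact pigeonhole _ _ _ (h 0).1 (h 0).2 (by simpa using h12)

theorem periodic_three_of_forall_ne_add_one_and_ne_add_two {R : Type*} [AddMonoidWithOne R]
    {σ : R → Fin 3} (h : ∀ v, σ v ≠ σ (v + 1) ∧ σ v ≠ σ (v + 2)) : Function.Periodic σ 3 := by
  intro v
  have h1 := h (v + 1)
  have h2 := (h (v + 2)).1
  norm_num [add_assoc] at h1 h2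
  have forced : ∀ a b c d : Fin 3, a ≠ b → a ≠ c → b ≠ c → b ≠ d → c ≠ d → d = a := by omega
  exact forced _ _ _ _ (h v).1 (h v).2 h1.1 h1.2 h2

theorem Function.Periodic.one_of_coprime {N c : ℕ} [NeZero N] {α : Type*} {f : Fin N → α}
    (hf : Function.Periodic f c) (hc : c.Coprime N) : Function.Periodic f 1 := by
  rcases le_or_gt N 1 with hN | hN
  · have := Fin.subsingleton_iff_le_one.mpr hN
    exact fun x => congrArg f (Subsingleton.elim _ _)
  obtain ⟨j, -, hj⟩ := Nat.exists_mul_mod_eq_one_of_coprime hc hN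
  have hjc : ((j * c : ℕ) : Fin N) = 1 := by
    rw [Fin.ext_iff, Fin.val_natCast, mul_comm, hj, Fin.val_one', Nat.mod_eq_of_lt hN]
  simpa only [← Nat.cast_mul, hjc] using hf.nat_mul j

theorem not_isPCF_cycleGraph_fin_three {n : ℕ} (hn : ¬ 3 ∣ n + 3) (σ : Fin (n + 3) → Fin 3) :
    ¬ IsPCF (cycleGraph (n + 3)) σ := by
  rw [isPCF_cycleGraph_iff]
  intro h
  have hper : Function.Periodic σ (3 : ℕ) := by
    simpa using periodic_three_of_forall_ne_add_one_and_ne_add_two h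
  have hcop : Nat.Coprime 3 (n + 3) := (Nat.Prime.coprime_iff_not_dvd Nat.prime_three).mpr hn
  exact (h 0).1 (hper.one_of_coprime hcop 0).symm

theorem Fin.val_add_eq_or {N : ℕ} (u v : Fin N) :
    (u + v).val = u.val + v.val ∨ (u + v).val + N = u.val + v.val := by
  rw [Fin.val_add_eq_ite]
  split_ifs <;> omega

theorem isPCF_cycleGraph_of_nat {n k : ℕ} (f : ℕ → Fin k)
    (hf : ∀ x < n + 3, ∀ d, 1 ≤ d → d ≤ 2 → ∀ y, y = x + d ∨ y + (n + 3) = x + d → f x ≠ f y) :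
    IsPCF (cycleGraph (n + 3)) (fun v => f v) := by
  rw [isPCF_cycleGraph_iff]
  intro v
  exact ⟨hf v v.isLt 1 le_rfl one_le_two _ (Fin.val_add_eq_or v 1),
    hf v v.isLt 2 one_le_two le_rfl _ (Fin.val_add_eq_or v 2)⟩

theorem isPCF_cycleGraph_mod_three {n : ℕ} (hn : 3 ∣ n + 3) :
    IsPCF (cycleGraph (n + 3)) (fun v => ((v : ℕ) : Fin 3)) :=
  isPCF_cycleGraph_of_nat _ fun x hx d hd₁ hd₂ y hy => by
    simp only [ne_eq, Fin.ext_iff, Fin.val_natCast]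
    omega

def blockColouring (a x : ℕ) : Fin 4 :=
  if x < 3 * a then (x % 3 : ℕ) else (x - 3 * a : ℕ)

theorem isPCF_cycleGraph_blockColouring {n a b : ℕ} (hn : n + 3 = 3 * a + 4 * b) :
    IsPCF (cycleGraph (n + 3)) (fun v => blockColouring a v) :=
  isPCF_cycleGraph_of_nat _ fun x hx d hd₁ hd₂ y hy => by
    simp only [blockColouring]
    split_ifs <;> simp only [ne_eq, Fin.ext_iff, Fin.val_natCast] <;> omega

theorem pcf_cycles (n : ℕ) (hn : 3 ≤ n) :
    (¬ (3 ∣ n) → n ≠ 5 →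
      (∃ σ : Fin n → Fin 4, IsPCF (SimpleGraph.cycleGraph n) σ) ∧
      ¬ (∃ σ : Fin n → Fin 3, IsPCF (SimpleGraph.cycleGraph n) σ)) ∧
    (3 ∣ n →
      (∃ σ : Fin n → Fin 3, IsPCF (SimpleGraph.cycleGraph n) σ) ∧
      ¬ (∃ σ : Fin n → Fin 2, IsPCF (SimpleGraph.cycleGraph n) σ)) := by
  obtain ⟨m, rfl⟩ : ∃ m, n = m + 3 := ⟨n - 3, by omega⟩
  refine ⟨fun h3 h5 => ⟨?_, fun ⟨σ, hσ⟩ => not_isPCF_cycleGraph_fin_three h3 σ hσ⟩,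
    fun h3 => ⟨⟨_, isPCF_cycleGraph_mod_three h3⟩, fun ⟨σ, hσ⟩ => not_isPCF_cycleGraph_fin_two σ hσ⟩⟩
  obtain ⟨a, b, hab⟩ : ∃ a b, m + 3 = 3 * a + 4 * b := by
    rcases (by omega : m % 3 = 1 ∨ m % 3 = 2) with h | h
    exacts [⟨m / 3, 1, by omega⟩, ⟨m / 3 - 1, 2, by omega⟩]
  exact ⟨_, isPCF_cycleGraph_blockColouring hab⟩
end

section
/- Let n ≥ 5 and let G be the graph obtained from the complete graph Kₙ by subdividing every edge exactly once. Then χ_pcf(G) = n, while the maximum degree of G is n−1, so χ_pcf(G) = Δ(G) + 1; moreover the chromatic number of G is 2. -/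
open Finset

/-- The graph obtained from the complete graph `Kₙ` by subdividing every edge exactly
once: branch vertices are `Fin n`, subdivision vertices are non-diagonal elements of
`Sym2 (Fin n)`, and a branch vertex is adjacent to the subdivision vertices of the
edges containing it. -/
def subdividedKn (n : ℕ) : SimpleGraph (Fin n ⊕ {e : Sym2 (Fin n) // ¬ e.IsDiag}) :=
  SimpleGraph.fromRel (fun a b =>
    ∃ (i : Fin n) (e : {e : Sym2 (Fin n) // ¬ e.IsDiag}),
      a = Sum.inl i ∧ b = Sum.inr e ∧ i ∈ e.val)

noncomputable instance (n : ℕ) : DecidableRel (subdividedKn n).Adj :=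
  Classical.decRel _

/-!
A subdivision vertex has exactly two neighbours, the endpoints of its edge, so conflict-freeness
there forces these two branch vertices to get different colours. Hence any proper conflict-free
colouring is injective on the `n` branch vertices and needs at least `n` colours.

Conversely, colour branch vertex `i` by `i` and the subdivision vertex of `e` by the first of
three fixed colours `x, y, z` that is not an endpoint of `e`. This is proper, and at a branch
vertex `i ≠ x` every incident edge except `ix` gets colour `x`, while at `x` every incident edge
except `xy` gets colour `y`; in both cases the exceptional edge has a unique colour.
-/

lemma Finset.card_filter_apply_eq_eq_one {α β : Type*} [DecidableEq β] {s : Finset α}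
    {f : α → β} {u : α} (hu : u ∈ s) (h : ∀ w ∈ s, w ≠ u → f w ≠ f u) :
    (s.filter (f · = f u)).card = 1 :=
  card_eq_one.2 ⟨u, by ext w; grind⟩

lemma IsPCF.apply_ne_of_neighborFinset_eq_pair {V : Type*} [Fintype V] [DecidableEq V]
    {G : SimpleGraph V} [DecidableRel G.Adj] {k : ℕ} {σ : V → Fin k} (h : IsPCF G σ)
    {v u w : V} (hv : G.neighborFinset v = {u, w}) (huw : u ≠ w) : σ u ≠ σ w := by
  intro hσ
  obtain ⟨x, hx, hcard⟩ :=
    h.2 v (by rw [← G.card_neighborFinset_eq_degree, hv, card_pair huw]; norm_num)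
  rw [hv] at hx hcard
  have hall : ({u, w} : Finset V).filter (σ · = σ x) = {u, w} := by
    refine filter_true_of_mem ?_
    simp only [mem_insert, mem_singleton] at hx ⊢
    grind
  rw [hall, card_pair huw] at hcard
  omega

section firstOutside
variable {α : Type*} [DecidableEq α] {x y z : α}

def firstOutside (x y z : α) (e : Sym2 α) : α :=
  if x ∉ e then x else if y ∉ e then y else z

def firstNe (x y : α) (i : α) : α := if i = x then y else x

lemma firstOutside_notMem (hxy : x ≠ y) (hxz : x ≠ z) (hyz : y ≠ z) (e : Sym2 α) :
    firstOutside x y z e ∉ e := by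
  unfold firstOutside
  by_cases hx : x ∈ e <;> by_cases hy : y ∈ e <;>
    simp only [hx, hy, not_true, not_false_eq_true, if_true, if_false]
  rw [(Sym2.mem_and_mem_iff hxy).1 ⟨hx, hy⟩, Sym2.mem_iff]
  grind

lemma firstNe_ne (hxy : x ≠ y) (i : α) : firstNe x y i ≠ i := by
  unfold firstNe; grind

lemma firstOutside_ne_firstOutside_firstNe (hxy : x ≠ y) (hxz : x ≠ z) (hyz : y ≠ z)
    {i j : α} (hji : j ≠ i) (hjp : j ≠ firstNe x y i) :
    firstOutside x y z s(i, j) ≠ firstOutside x y z s(i, firstNe x y i) := by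
  unfold firstOutside firstNe at *
  simp only [Sym2.mem_iff]
  grind

end firstOutside

namespace subdividedKn
variable {n : ℕ}

@[simp] lemma adj_inl_inl (i j : Fin n) : ¬ (subdividedKn n).Adj (.inl i) (.inl j) := by
  simp [subdividedKn]

@[simp] lemma adj_inr_inr (e f : {e : Sym2 (Fin n) // ¬ e.IsDiag}) :
    ¬ (subdividedKn n).Adj (.inr e) (.inr f) := by
  simp [subdividedKn]

@[simp] lemma adj_inl_inr (i : Fin n) (e : {e : Sym2 (Fin n) // ¬ e.IsDiag}) :
    (subdividedKn n).Adj (.inl i) (.inr e) ↔ i ∈ e.val := by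
  simp [subdividedKn]; grind

@[simp] lemma adj_inr_inl (i : Fin n) (e : {e : Sym2 (Fin n) // ¬ e.IsDiag}) :
    (subdividedKn n).Adj (.inr e) (.inl i) ↔ i ∈ e.val := by
  rw [SimpleGraph.adj_comm, adj_inl_inr]

lemma neighborFinset_inl (i : Fin n) :
    (subdividedKn n).neighborFinset (.inl i) = ({e | i ∈ e.val} : Finset _).map .inr := by
  ext (j | e) <;> simp

lemma neighborFinset_inr (a b : Fin n) (h : ¬ s(a, b).IsDiag) :
    (subdividedKn n).neighborFinset (.inr ⟨s(a, b), h⟩) = {.inl a, .inl b} := by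
  ext (j | e) <;> simp

lemma degree_inl (i : Fin n) : (subdividedKn n).degree (.inl i) = n - 1 :=
  calc (subdividedKn n).degree (.inl i)
      = Fintype.card ((⊤ : SimpleGraph (Fin n)).incidenceSet i) := by
        rw [SimpleGraph.degree, neighborFinset_inl, card_map, ← Fintype.card_subtype]
        exact Fintype.card_congr
          { toFun e := ⟨e.1.1, by simpa using e.1.2, e.2⟩
            invFun e := ⟨⟨e.1, by simpa using e.2.1⟩, e.2.2⟩ }
    _ = n - 1 := by rw [SimpleGraph.card_incidenceSet_eq_degree]; simp

lemma degree_inr (e : {e : Sym2 (Fin n) // ¬ e.IsDiag}) :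
    (subdividedKn n).degree (.inr e) = 2 := by
  obtain ⟨e, he⟩ := e
  induction e using Sym2.ind with
  | _ a b => rw [SimpleGraph.degree, neighborFinset_inr a b he, card_pair (by simpa using he)]

lemma maxDegree_eq (hn : 3 ≤ n) : (subdividedKn n).maxDegree = n - 1 := by
  refine le_antisymm (SimpleGraph.maxDegree_le_of_forall_degree_le _ _ ?_) ?_
  · rintro (i | e)
    · rw [degree_inl]
    · rw [degree_inr]; omega
  · exact (degree_inl ⟨0, by omega⟩).symm.trans_le (SimpleGraph.degree_le_maxDegree _ _)

lemma chromaticNumber_eq_two (hn : 2 ≤ n) : (subdividedKn n).chromaticNumber = 2 := by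
  have hadj : (subdividedKn n).Adj (.inl ⟨0, by omega⟩)
      (.inr ⟨s(⟨0, by omega⟩, ⟨1, by omega⟩), by simp⟩) := by simp
  refine SimpleGraph.chromaticNumber_eq_two_iff.2
    ⟨⟨.mk (Sum.elim (fun _ => 0) (fun _ => 1)) ?_⟩, SimpleGraph.ne_bot_iff_exists_adj.2 ⟨_, _, hadj⟩⟩
  rintro (i | e) (j | f) h <;> simp_all

lemma le_of_isPCF {k : ℕ} {σ : Fin n ⊕ {e : Sym2 (Fin n) // ¬ e.IsDiag} → Fin k}
    (h : IsPCF (subdividedKn n) σ) : n ≤ k := by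
  have hinj : Function.Injective (σ ∘ Sum.inl) := fun a b hab => by_contra fun hne =>
    h.apply_ne_of_neighborFinset_eq_pair (neighborFinset_inr a b (by simpa using hne))
      (by simpa using hne) hab
  simpa using Fintype.card_le_of_injective _ hinj

noncomputable def pcfColouring (x y z : Fin n) :
    Fin n ⊕ {e : Sym2 (Fin n) // ¬ e.IsDiag} → Fin n :=
  Sum.elim id (fun e => firstOutside x y z e.val)

lemma isPCF_pcfColouring {x y z : Fin n} (hxy : x ≠ y) (hxz : x ≠ z) (hyz : y ≠ z) :
    IsPCF (subdividedKn n) (pcfColouring x y z) := by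
  refine ⟨?_, ?_⟩
  · rintro (i | e) (j | f) h <;>
      simp only [adj_inl_inl, adj_inr_inr, adj_inl_inr, adj_inr_inl] at h
    · exact ne_of_mem_of_not_mem h (firstOutside_notMem hxy hxz hyz f.val)
    · exact (ne_of_mem_of_not_mem h (firstOutside_notMem hxy hxz hyz e.val)).symm
  · rintro (i | ⟨e, he⟩) -
    · have hp : ¬ s(i, firstNe x y i).IsDiag := by simpa using (firstNe_ne hxy i).symm
      refine ⟨.inr ⟨_, hp⟩, by simp, Finset.card_filter_apply_eq_eq_one (by simp) ?_⟩
      rintro (j | ⟨f, hf⟩) hw hne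
      · simp at hw
      · obtain ⟨j, rfl⟩ := Sym2.mem_iff_exists.1 (by simpa using hw)
        simp only [ne_eq, Sum.inr.injEq, Subtype.mk.injEq, Sym2.eq_iff, true_and] at hne
        exact firstOutside_ne_firstOutside_firstNe hxy hxz hyz
          (by simpa [eq_comm] using hf) (by grind)
    · induction e using Sym2.ind with
      | _ a b =>
        rw [neighborFinset_inr a b he]
        refine ⟨.inl a, by simp, Finset.card_filter_apply_eq_eq_one (by simp) ?_⟩
        intro w hw hne
        obtain rfl : w = .inl b := by simpa [hne] using hw
        simpa [pcfColouring, eq_comm] using he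

end subdividedKn

theorem pcf_subdivided_complete (n : ℕ) (hn : 5 ≤ n) :
    (∃ σ : Fin n ⊕ {e : Sym2 (Fin n) // ¬ e.IsDiag} → Fin n,
        IsPCF (subdividedKn n) σ) ∧
    ¬ (∃ σ : Fin n ⊕ {e : Sym2 (Fin n) // ¬ e.IsDiag} → Fin (n - 1),
        IsPCF (subdividedKn n) σ) ∧
    (subdividedKn n).maxDegree = n - 1 ∧
    (subdividedKn n).chromaticNumber = 2 := by
  refine ⟨⟨_, subdividedKn.isPCF_pcfColouring (x := ⟨0, by omega⟩) (y := ⟨1, by omega⟩)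
      (z := ⟨2, by omega⟩) (by simp) (by simp) (by simp)⟩, ?_,
    subdividedKn.maxDegree_eq (by omega), subdividedKn.chromaticNumber_eq_two (by omega)⟩
  rintro ⟨σ, hσ⟩
  have := subdividedKn.le_of_isPCF hσ
  omega
end

section
/- Let G be a graph and σ a proper colouring of G. Suppose C ⊆ V(G) is an independent set such that for every vertex v with a designated set W(v) of witnesses of v in σ, if u ∈ W(v) and u ∈ C then N(v) ∩ C = {u}. Let σ' be obtained from σ by recolouring all vertices of C with a single fresh colour not used by σ. Then σ' is proper, and for every vertex v, every u ∈ W(v) remains a witness of v in σ'. -/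
/-!
Recolouring `C` with a fresh colour `c` leaves every other colour class of a neighbourhood
`N(v)` unchanged except that its members in `C` drop out, and turns the members of `N(v) ∩ C`
into the new class of `c`. A witness `u ∉ C` is alone in its class, so it keeps it; a witness
`u ∈ C` is by assumption the only vertex of `N(v) ∩ C`.
-/

open Finset

section Recolour

variable {V α : Type*} [DecidableEq V]

def recolour (σ : V → α) (C : Finset V) (c : α) : V → α :=
  fun x => if x ∈ C then c else σ x

variable {σ : V → α} {C : Finset V} {c : α}

@[simp]
lemma recolour_of_mem {x : V} (hx : x ∈ C) : recolour σ C c x = c := if_pos hx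

@[simp]
lemma recolour_of_notMem {x : V} (hx : x ∉ C) : recolour σ C c x = σ x := if_neg hx

lemma recolour_ne_of_adj (G : SimpleGraph V) (hproper : ∀ u v, G.Adj u v → σ u ≠ σ v)
    (hind : ∀ u ∈ C, ∀ w ∈ C, ¬ G.Adj u w) (hfresh : ∀ x, σ x ≠ c) {u v : V}
    (huv : G.Adj u v) : recolour σ C c u ≠ recolour σ C c v := by
  by_cases hu : u ∈ C <;> by_cases hv : v ∈ C <;> simp only [hu, hv, recolour_of_mem,
    recolour_of_notMem, not_false_eq_true]
  · exact absurd huv (hind u hu v hv)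
  · exact (hfresh v).symm
  · exact hfresh u
  · exact hproper u v huv

lemma filter_recolour_eq_fresh [DecidableEq α] (hfresh : ∀ x, σ x ≠ c) (s : Finset V) :
    {w ∈ s | recolour σ C c w = c} = s ∩ C := by
  ext w
  by_cases hw : w ∈ C <;> simp [hw, hfresh]

lemma filter_recolour_eq_of_ne [DecidableEq α] {a : α} (ha : a ≠ c) (s : Finset V) :
    {w ∈ s | recolour σ C c w = a} = {w ∈ s | σ w = a} \ C := by
  ext w
  by_cases hw : w ∈ C <;> simp [hw, Ne.symm ha]

lemma card_filter_recolour_eq_one_of_mem [DecidableEq α] (hfresh : ∀ x, σ x ≠ c)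
    {s : Finset V} {u : V} (hu : u ∈ C) (hsC : s ∩ C = {u}) :
    #{w ∈ s | recolour σ C c w = recolour σ C c u} = 1 := by
  rw [recolour_of_mem hu, filter_recolour_eq_fresh hfresh, hsC, card_singleton]

lemma card_filter_recolour_eq_one_of_notMem [DecidableEq α] {s : Finset V} {u : V}
    (hcu : σ u ≠ c) (hu : u ∉ C) (hus : u ∈ s) (hsolitary : #{w ∈ s | σ w = σ u} = 1) :
    #{w ∈ s | recolour σ C c w = recolour σ C c u} = 1 := by
  have hclass : {w ∈ s | σ w = σ u} = {u} :=
    eq_singleton_iff_unique_mem.mpr ⟨mem_filter.mpr ⟨hus, rfl⟩, fun w hw =>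
      card_le_one.mp hsolitary.le w hw u (mem_filter.mpr ⟨hus, rfl⟩)⟩
  rw [recolour_of_notMem hu, filter_recolour_eq_of_ne hcu, hclass,
    sdiff_eq_self_of_disjoint (disjoint_singleton_left.mpr hu), card_singleton]

end Recolour

theorem recolour_preserves_witnesses {V : Type*} [Fintype V] [DecidableEq V]
    (G : SimpleGraph V) [DecidableRel G.Adj] (σ : V → ℕ)
    (hproper : ∀ u v, G.Adj u v → σ u ≠ σ v)
    (W : V → Finset V) (hW : ∀ v, W v ⊆ G.neighborFinset v)
    (hwit : ∀ v, ∀ u ∈ W v,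
      ((G.neighborFinset v).filter (fun w => σ w = σ u)).card = 1)
    (C : Finset V) (hind : ∀ u ∈ C, ∀ w ∈ C, ¬ G.Adj u w)
    (hcond : ∀ v, ∀ u ∈ W v, u ∈ C → G.neighborFinset v ∩ C = {u})
    (c : ℕ) (hfresh : ∀ x, σ x ≠ c) :
    (∀ u v, G.Adj u v →
      (fun x => if x ∈ C then c else σ x) u ≠ (fun x => if x ∈ C then c else σ x) v) ∧
    ∀ v, ∀ u ∈ W v,
      ((G.neighborFinset v).filter
        (fun w => (if w ∈ C then c else σ w) = (if u ∈ C then c else σ u))).card = 1 := by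
  refine ⟨fun u v huv => recolour_ne_of_adj G hproper hind hfresh huv, fun v u hu => ?_⟩
  by_cases huC : u ∈ C
  · exact card_filter_recolour_eq_one_of_mem hfresh huC (hcond v u hu huC)
  · exact card_filter_recolour_eq_one_of_notMem (hfresh u) huC (hW v hu) (hwit v u hu)
end
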